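/- arXiv:0709.1261 — 3 statements merged into one kernel-verified Lean document; each statement's English description precedes it below -/
import Mathlib

section
/- Let f be a monotone function of subexponential growth, d a degree bound, and ε > 0. Then there exists a constant K (depending on f, ε) such that for every finite graph G of vertex degree bound d and growth bounded by f, there is a set T ⊆ V(G) with |T| ≤ ε|V(G)| such that every connected component of the subgraph induced by V(G) \ T has at most K vertices. Consequently, every sequence of finite graphs of subexponential growth with uniformly bounded degrees is an antiexpander sequence. -/
open scoped Classical

noncomputable section

namespace GraphPaper

open Filter

variable {V W : Type*}

/-- The star of a vertex `y` in `G`: the subgraph consisting of `y`, its neighbours and the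
edges from `y` to its neighbours (realized as a graph on the full vertex set). -/
def graphStar (G : SimpleGraph V) (y : V) : SimpleGraph V where
  Adj a b := G.Adj a b ∧ (a = y ∨ b = y)
  symm := ⟨fun a b h => ⟨h.1.symm, h.2.symm⟩⟩
  loopless := ⟨fun a h => G.loopless.irrefl a h.1⟩

/-- Rooted isomorphism of graphs with distinguished roots. -/
def rootedIso (G : SimpleGraph V) (y : V) (H : SimpleGraph W) (z : W) : Prop :=
  ∃ e : V ≃ W, e y = z ∧ ∀ a b : V, G.Adj a b ↔ H.Adj (e a) (e b)

/-- δ(G,H): proportion of vertices whose stars differ up to rooted isomorphism. -/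
def starDelta [Fintype V] (G H : SimpleGraph V) : ℝ :=
  (Nat.card {y : V | ¬ rootedIso (graphStar G y) y (graphStar H y) y} : ℝ) /
    (Fintype.card V : ℝ)

/-- `H^σ`, the graph with edges `(σ x, σ y)` for `(x,y) ∈ E(H)`. -/
def permGraph (H : SimpleGraph V) (σ : Equiv.Perm V) : SimpleGraph V :=
  SimpleGraph.comap (σ.symm : V → V) H

/-- δ_s(G,H) = min over permutations σ of δ(G,H^σ). -/
def deltaS [Fintype V] (G H : SimpleGraph V) : ℝ :=
  ⨅ σ : Equiv.Perm V, starDelta G (permGraph H σ)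

/-- The disjoint union of `q` copies of `G`. -/
def copies (q : ℕ) (G : SimpleGraph V) : SimpleGraph (Fin q × V) where
  Adj a b := a.1 = b.1 ∧ G.Adj a.2 b.2
  symm := ⟨fun a b h => ⟨h.1.symm, h.2.symm⟩⟩
  loopless := ⟨fun a h => G.loopless.irrefl a.2 h.2⟩

/-- The geometric distance δ_ρ(G,H) = inf { δ_s(qG, rH) : q|V(G)| = r|V(H)| }, where the
two disjoint unions are represented on a common vertex set via an equivalence. -/
def deltaRho [Fintype V] [Fintype W] (G : SimpleGraph V) (H : SimpleGraph W) : ℝ :=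
  sInf { x : ℝ | ∃ q r : ℕ, 0 < q ∧ 0 < r ∧ q * Fintype.card V = r * Fintype.card W ∧
    x = ⨅ e : (Fin q × V) ≃ (Fin r × W),
      starDelta (copies q G) (SimpleGraph.comap (e : Fin q × V → Fin r × W) (copies r H)) }

/-- Vertex degree bound `d`. -/
def degBound (G : SimpleGraph V) (d : ℕ) : Prop := ∀ v : V, (G.neighborSet v).ncard ≤ d

/-- The ball of radius `r` around `x` in the shortest path metric. -/
def ballSet (G : SimpleGraph V) (x : V) (r : ℕ) : Set V :=
  {v | G.Reachable x v ∧ G.dist x v ≤ r}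

theorem root_mem (G : SimpleGraph V) (x : V) (r : ℕ) : x ∈ ballSet G x r :=
  ⟨SimpleGraph.Reachable.refl x, by simp [SimpleGraph.dist_self]⟩

/-- `B_r(x)` (rooted at `x`) represents the rooted pattern `(H, y)`. -/
def ballRep (G : SimpleGraph V) (x : V) (r : ℕ) (H : SimpleGraph W) (y : W) : Prop :=
  ∃ f : ballSet G x r ≃ W, f ⟨x, root_mem G x r⟩ = y ∧
    ∀ a b : ballSet G x r, G.Adj (a : V) (b : V) ↔ H.Adj (f a) (f b)

/-- `p_G(α)`: the frequency of vertices whose rooted `r`-ball represents the pattern `(H,y)`. -/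
def patternFreq [Fintype V] (G : SimpleGraph V) (r : ℕ) (H : SimpleGraph W) (y : W) : ℝ :=
  (Nat.card {x : V | ballRep G x r H y} : ℝ) / (Fintype.card V : ℝ)

/-- All connected components of `G` have at most `K` vertices. -/
def smallComps (G : SimpleGraph V) (K : ℕ) : Prop :=
  ∀ x : V, Nat.card {y : V | G.Reachable x y} ≤ K

/-- The subgraph induced on a set `s` (kept on the full vertex set). -/
def inducedOn (G : SimpleGraph V) (s : Set V) : SimpleGraph V where
  Adj a b := G.Adj a b ∧ a ∈ s ∧ b ∈ s
  symm := ⟨fun a b h => ⟨h.1.symm, h.2.2, h.2.1⟩⟩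
  loopless := ⟨fun a h => G.loopless.irrefl a h.1⟩

/-- The (inner) boundary of `s` in `G`. -/
def gBoundary (G : SimpleGraph V) (s : Set V) : Set V :=
  {x | x ∈ s ∧ ∃ y, y ∉ s ∧ G.Adj x y}

/-- The `s`-ball of `x` is the same (as a labeled subgraph) in `G₁` and `G₂`. -/
def sBallMatch (G₁ G₂ : SimpleGraph V) (s : ℕ) (x : V) : Prop :=
  ballSet G₁ x s = ballSet G₂ x s ∧
  ∀ a b : V, a ∈ ballSet G₁ x s → b ∈ ballSet G₁ x s → (G₁.Adj a b ↔ G₂.Adj a b)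

/-- The number of eigenvalues (roots of the characteristic polynomial, with multiplicity)
of `M` that are at most `lam`. -/
def specCount {ι : Type*} [Fintype ι] [DecidableEq ι] (M : Matrix ι ι ℝ) (lam : ℝ) : ℝ :=
  ((M.charpoly.roots.filter (fun x => x ≤ lam)).card : ℝ)

/-- The compression `p_n Δ i_n` of the Laplacian of `G` to a finite set `s`. -/
def lapCompress [DecidableEq V] (G : SimpleGraph V) (s : Finset V) : Matrix s s ℝ :=
  Matrix.of fun x y : s =>
    (if (x : V) = (y : V) then ((G.neighborSet (x : V)).ncard : ℝ) else 0) -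
      (if G.Adj (x : V) (y : V) then 1 else 0)

/-- The intrinsic Laplacian of the subgraph induced on a finite set `s`. -/
def lapInduced [DecidableEq V] (G : SimpleGraph V) (s : Finset V) : Matrix s s ℝ :=
  Matrix.of fun x y : s =>
    (if (x : V) = (y : V) then ((G.neighborSet (x : V) ∩ (s : Set V)).ncard : ℝ) else 0) -
      (if G.Adj (x : V) (y : V) then 1 else 0)

/-!
Around a vertex `x` of a finite set `s`, the balls `B_r(x)` of the graph induced on `s` start at
one vertex and stay below `f R < (1 + δ)^R`, so some radius `r < R` has
`|B_{r+1}| ≤ (1 + δ) |B_r|`. Deleting the shell `B_{r+1} \ B_r` costs at most `δ |B_r|` vertices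
and cuts `B_r` off as a union of components of size at most `f R`; recursing on `s \ B_{r+1}`
gives a separator of size at most `δ |s|`. For the edge version one separates the vertices of
positive degree, of which there are at most `2|E|`, and deletes the at most `d |T|` edges at `T`.
-/

open SimpleGraph

section Components

variable {G H H' : SimpleGraph V} {K : ℕ}

lemma mem_of_reachable_of_adj_closed {A : Set V} (hA : ∀ a b, a ∈ A → H.Adj a b → b ∈ A)
    {x y : V} (hx : x ∈ A) (h : H.Reachable x y) : y ∈ A := by
  obtain ⟨w⟩ := h
  induction w with
  | nil => exact hx
  | cons hadj _ ih => exact ih (hA _ _ hx hadj)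

lemma smallComps_of_le [Finite V] (h : H ≤ H') (hH' : smallComps H' K) : smallComps H K :=
  fun x => (Nat.card_mono (Set.toFinite _) fun _ hy => hy.mono h).trans (hH' x)

lemma smallComps_bot (hK : 1 ≤ K) : smallComps (⊥ : SimpleGraph V) K := fun x => by
  simpa [reachable_bot] using hK

lemma inducedOn_le (s : Set V) : inducedOn G s ≤ G := fun _ _ h => h.1

lemma smallComps_inducedOn_union [Finite V] {A C : Set V}
    (hAC : ∀ a ∈ A, ∀ c ∈ C, ¬ G.Adj a c) (hA : A.ncard ≤ K)
    (hC : smallComps (inducedOn G C) K) : smallComps (inducedOn G (A ∪ C)) K := by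
  have mem_A_of_adj : ∀ a b, (inducedOn G (A ∪ C)).Adj a b → (a ∈ A ↔ b ∈ A) := by
    rintro a b ⟨hab, ha | ha, hb | hb⟩ <;> have hba := hab.symm <;> grind
  intro x
  by_cases hx : x ∈ A
  · refine le_trans ?_ hA
    rw [← Nat.card_coe_set_eq]
    exact Nat.card_mono A.toFinite fun y => mem_of_reachable_of_adj_closed
      (fun a b ha hab => (mem_A_of_adj a b hab).1 ha) hx
  · refine le_trans (Nat.card_mono (Set.toFinite _) fun y hy => ?_) (hC x)
    have hclosed : ∀ a b, a ∉ A ∧ (inducedOn G C).Reachable x a →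
        (inducedOn G (A ∪ C)).Adj a b → b ∉ A ∧ (inducedOn G C).Reachable x b := by
      rintro a b ⟨ha, hxa⟩ hab
      have hb : b ∉ A := fun hb => ha ((mem_A_of_adj a b hab).2 hb)
      exact ⟨hb, hxa.trans (Adj.reachable
        ⟨hab.1, hab.2.1.resolve_left ha, hab.2.2.resolve_left hb⟩)⟩
    exact (mem_of_reachable_of_adj_closed (A := {a | a ∉ A ∧ _}) hclosed
      ⟨hx, Reachable.refl x⟩ hy).2

end Components

section Balls

variable {G H : SimpleGraph V}

lemma ballSet_mono {x : V} {r r' : ℕ} (h : r ≤ r') : ballSet G x r ⊆ ballSet G x r' :=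
  fun _ hv => ⟨hv.1, hv.2.trans h⟩

lemma ballSet_mono_graph (h : H ≤ G) (x : V) (r : ℕ) : ballSet H x r ⊆ ballSet G x r := by
  rintro v ⟨hr, hd⟩
  obtain ⟨p, hp⟩ := hr.exists_walk_length_eq_dist
  exact ⟨hr.mono h, (dist_le (p.mapLe h)).trans (by simpa [hp] using hd)⟩

lemma ballSet_zero (x : V) : ballSet G x 0 = {x} := by
  ext v
  simp only [ballSet, Set.mem_ofPred_eq, Set.mem_singleton_iff, Nat.le_zero]
  exact ⟨fun ⟨hr, hd⟩ => ((Reachable.dist_eq_zero_iff hr).mp hd).symm,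
    by rintro rfl; simp⟩

lemma mem_ballSet_succ_of_adj {x a b : V} {r : ℕ} (ha : a ∈ ballSet G x r) (hab : G.Adj a b) :
    b ∈ ballSet G x (r + 1) := by
  obtain ⟨hr, hd⟩ := ha
  obtain ⟨p, hp⟩ := hr.exists_walk_length_eq_dist
  refine ⟨hr.trans hab.reachable, (dist_le (p.concat hab)).trans ?_⟩
  rw [Walk.length_concat, hp]
  omega

lemma ballSet_inducedOn_subset {s : Set V} {x : V} (hx : x ∈ s) (r : ℕ) :
    ballSet (inducedOn G s) x r ⊆ s :=
  fun _ hv =>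
    mem_of_reachable_of_adj_closed (H := inducedOn G s) (fun _ _ _ hab => hab.2.2) hx hv.1

lemma one_le_ncard_ballSet [Finite V] (x : V) (r : ℕ) : 1 ≤ (ballSet G x r).ncard :=
  (Set.ncard_pos).mpr ⟨x, root_mem G x r⟩

end Balls

lemma exists_succ_le_one_add_mul_of_lt_pow {g : ℕ → ℝ} {δ : ℝ} {R : ℕ} (hδ : 0 ≤ δ)
    (h0 : 1 ≤ g 0) (hR : g R < (1 + δ) ^ R) : ∃ r < R, g (r + 1) ≤ (1 + δ) * g r := by
  by_contra! h
  have hpow : ∀ r ≤ R, (1 + δ) ^ r ≤ g r := by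
    intro r hr
    induction r with
    | zero => simpa using h0
    | succ k ih =>
      calc (1 + δ) ^ (k + 1) = (1 + δ) * (1 + δ) ^ k := pow_succ' _ _
        _ ≤ (1 + δ) * g k := by gcongr; exact ih (by omega)
        _ ≤ g (k + 1) := (h k (by omega)).le
  linarith [hpow R le_rfl]

lemma sdiff_sdiff_union_eq {s B B' T : Set V} (hBB' : B ⊆ B') (hB's : B' ⊆ s)
    (hT : T ⊆ s \ B') : s \ (B' \ B ∪ T) = B ∪ (s \ B') \ T := by
  ext y
  have := @hBB' y
  have := @hB's y
  have := @hT y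
  simp only [Set.mem_sdiff, Set.mem_union] at *
  tauto

lemma ncard_shell_union_le {s B B' T : Set V} [Finite V] {δ : ℝ} (hδ : 0 ≤ δ)
    (hBB' : B ⊆ B') (hB's : B' ⊆ s) (hslow : (B'.ncard : ℝ) ≤ (1 + δ) * B.ncard)
    (hT : (T.ncard : ℝ) ≤ δ * (s \ B').ncard) : ((B' \ B ∪ T).ncard : ℝ) ≤ δ * s.ncard := by
  have hshell : ((B' \ B).ncard : ℝ) + B.ncard = B'.ncard := by
    exact_mod_cast Set.ncard_sdiff_add_ncard_of_subset hBB'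
  have hrest : ((s \ B').ncard : ℝ) + B'.ncard = s.ncard := by
    exact_mod_cast Set.ncard_sdiff_add_ncard_of_subset hB's
  have hB : (B.ncard : ℝ) ≤ B'.ncard := by exact_mod_cast Set.ncard_le_ncard hBB'
  have hunion : ((B' \ B ∪ T).ncard : ℝ) ≤ (B' \ B).ncard + T.ncard := by
    exact_mod_cast Set.ncard_union_le _ _
  nlinarith

theorem exists_separator_of_ncard_ballSet_lt_pow [Finite V] (G : SimpleGraph V) {K R : ℕ}
    {δ : ℝ} (hδ : 0 ≤ δ) (hgrowth : ∀ x, ((ballSet G x R).ncard : ℝ) < (1 + δ) ^ R)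
    (hK : ∀ x, (ballSet G x R).ncard ≤ K) (s : Set V) :
    ∃ T ⊆ s, (T.ncard : ℝ) ≤ δ * s.ncard ∧ smallComps (inducedOn G (s \ T)) K := by
  induction hn : s.ncard using Nat.strong_induction_on generalizing s with
  | _ n IH =>
  rcases s.eq_empty_or_nonempty with rfl | ⟨x₀, hx₀⟩
  · refine ⟨∅, le_rfl, by simp [← hn], fun x => ?_⟩
    exact smallComps_of_le (H := inducedOn G (∅ \ ∅)) (fun _ _ h => h.2.1.1.elim)
      (smallComps_bot ((one_le_ncard_ballSet x R).trans (hK x))) x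
  set H := inducedOn G s
  have hballG : ∀ r, ballSet H x₀ r ⊆ ballSet G x₀ r := ballSet_mono_graph (inducedOn_le s) x₀
  obtain ⟨r, hrR, hslow⟩ := exists_succ_le_one_add_mul_of_lt_pow
    (g := fun r => ((ballSet H x₀ r).ncard : ℝ)) hδ (by simp [ballSet_zero])
    ((Nat.cast_le.mpr (Set.ncard_le_ncard (hballG R))).trans_lt (hgrowth x₀))
  set B := ballSet H x₀ r
  set B' := ballSet H x₀ (r + 1)
  have hBB' : B ⊆ B' := ballSet_mono (by omega)
  have hB's : B' ⊆ s := ballSet_inducedOn_subset hx₀ _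
  have hx₀B' : x₀ ∈ B' := root_mem H x₀ _
  obtain ⟨T, hTs, hTcard, hTsmall⟩ := IH _
    (hn ▸ Set.ncard_lt_ncard (Set.sdiff_ssubset_left_iff.mpr ⟨x₀, hx₀, hx₀B'⟩)) (s \ B') rfl
  refine ⟨B' \ B ∪ T,
    Set.union_subset (Set.sdiff_subset.trans hB's) (hTs.trans Set.sdiff_subset),
    hn ▸ ncard_shell_union_le hδ hBB' hB's hslow hTcard, ?_⟩
  rw [sdiff_sdiff_union_eq hBB' hB's hTs]
  refine smallComps_inducedOn_union (fun a ha c hc hac => ?_) ?_ hTsmall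
  · exact hc.1.2 (mem_ballSet_succ_of_adj ha ⟨hac, hB's (hBB' ha), hc.1.1⟩)
  · exact (Set.ncard_le_ncard ((ballSet_mono hrR.le).trans (hballG R))).trans (hK x₀)

lemma exists_one_le_lt_one_add_pow_of_subexp {f : ℕ → ℕ}
    (hsub : ∀ β : ℝ, 0 < β → ∃ R : ℕ, ∀ r : ℕ, R ≤ r → (f r : ℝ) ≤ Real.exp (β * r))
    {δ : ℝ} (hδ : 0 < δ) : ∃ R, 1 ≤ R ∧ (f R : ℝ) < (1 + δ) ^ R := by
  have hlog : 0 < Real.log (1 + δ) := Real.log_pos (by linarith)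
  obtain ⟨R₀, hR₀⟩ := hsub (Real.log (1 + δ) / 2) (by positivity)
  refine ⟨max R₀ 1, le_max_right _ _, ?_⟩
  have hR : (1 : ℝ) ≤ (max R₀ 1 : ℕ) := by exact_mod_cast le_max_right R₀ 1
  calc (f (max R₀ 1) : ℝ) ≤ Real.exp (Real.log (1 + δ) / 2 * (max R₀ 1 : ℕ)) :=
        hR₀ _ (le_max_left _ _)
    _ < Real.exp ((max R₀ 1 : ℕ) * Real.log (1 + δ)) := Real.exp_lt_exp.mpr (by nlinarith)
    _ = (1 + δ) ^ (max R₀ 1) := by rw [Real.exp_nat_mul, Real.exp_log (by linarith)]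

theorem exists_separator_of_subexp {f : ℕ → ℕ}
    (hsub : ∀ β : ℝ, 0 < β → ∃ R : ℕ, ∀ r : ℕ, R ≤ r → (f r : ℝ) ≤ Real.exp (β * r))
    {δ : ℝ} (hδ : 0 < δ) :
    ∃ K : ℕ, 0 < K ∧ ∀ (V : Type*) [Finite V] (G : SimpleGraph V),
      (∀ (x : V) (r : ℕ), 1 ≤ r → Nat.card (ballSet G x r) ≤ f r) → ∀ s : Set V,
      ∃ T ⊆ s, (T.ncard : ℝ) ≤ δ * s.ncard ∧ smallComps (inducedOn G (s \ T)) K := by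
  obtain ⟨R, hR, hfR⟩ := exists_one_le_lt_one_add_pow_of_subexp hsub hδ
  refine ⟨max (f R) 1, by omega, fun V _ G hgrow => ?_⟩
  have hball : ∀ x, (ballSet G x R).ncard ≤ f R := fun x => by
    simpa [Nat.card_coe_set_eq] using hgrow x R hR
  exact exists_separator_of_ncard_ballSet_lt_pow G hδ.le
    (fun x => (Nat.cast_le.mpr (hball x)).trans_lt hfR)
    (fun x => (hball x).trans (le_max_left _ _))

section Edges

variable [Fintype V] {G : SimpleGraph V}

lemma ncard_biUnion_incidenceSet_le {d : ℕ} (hdeg : degBound G d) (T : Set V) :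
    (⋃ v ∈ T, G.incidenceSet v).ncard ≤ d * T.ncard := by
  lift T to Finset V using T.toFinite
  simp only [Finset.mem_coe, Set.ncard_coe_finset]
  refine (T.set_ncard_biUnion_le _).trans ?_
  rw [mul_comm, ← smul_eq_mul]
  refine Finset.sum_le_card_nsmul _ _ _ fun v _ => ?_
  rw [← Nat.card_coe_set_eq, Nat.card_congr (G.incidenceSetEquivNeighborSet v),
    Nat.card_coe_set_eq]
  exact hdeg v

lemma ncard_support_le_two_mul_card_edgeSet : G.support.ncard ≤ 2 * Nat.card G.edgeSet := by
  have hsurj : Function.Surjective fun e : G.Dart => (⟨e.fst, e.snd, e.adj⟩ : G.support) :=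
    fun ⟨v, w, hvw⟩ => ⟨⟨(v, w), hvw⟩, rfl⟩
  rw [← Nat.card_coe_set_eq, Nat.card_eq_card_toFinset G.edgeSet]
  exact (Nat.card_le_card_of_surjective _ hsurj).trans_eq
    (by rw [Nat.card_eq_fintype_card, G.dart_card_eq_twice_card_edges]; rfl)

end Edges

lemma deleteEdges_biUnion_incidenceSet_le_inducedOn (T : Set V) :
    G.deleteEdges (⋃ v ∈ T, G.incidenceSet v) ≤ inducedOn G (G.support \ T) := by
  intro a b hab
  obtain ⟨hG, hF⟩ := deleteEdges_adj.mp hab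
  simp only [Set.mem_iUnion, not_exists] at hF
  have hba : s(a, b) ∈ G.incidenceSet b := by
    rw [Sym2.eq_swap]
    exact (G.mem_incidenceSet b a).mpr hG.symm
  exact ⟨hG, ⟨⟨b, hG⟩, fun ha => hF a ha ((G.mem_incidenceSet a b).mpr hG)⟩,
    ⟨⟨a, hG.symm⟩, fun hb => hF b hb hba⟩⟩

theorem antiexpander_of_subexp_general (f : ℕ → ℕ)
    (hsub : ∀ β : ℝ, 0 < β → ∃ R : ℕ, ∀ r : ℕ, R ≤ r → (f r : ℝ) ≤ Real.exp (β * r))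
    (d : ℕ) (ε : ℝ) (hε : 0 < ε) :
    (∃ K : ℕ, 0 < K ∧ ∀ (V : Type) [Fintype V] (G : SimpleGraph V), degBound G d →
      (∀ (x : V) (r : ℕ), 1 ≤ r → Nat.card (ballSet G x r) ≤ f r) →
      ∃ T : Set V, (Nat.card T : ℝ) ≤ ε * (Fintype.card V : ℝ) ∧
        smallComps (inducedOn G Tᶜ) K) ∧
    (∀ (V : ℕ → Type) [∀ n, Fintype (V n)] (G : ∀ n, SimpleGraph (V n)),
      (∀ n, degBound (G n) d) →
      (∀ n (x : V n) (r : ℕ), 1 ≤ r → Nat.card (ballSet (G n) x r) ≤ f r) →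
      ∀ ε' : ℝ, 0 < ε' → ∃ K' : ℕ, 0 < K' ∧ ∀ n, ∃ F : Set (Sym2 (V n)),
        F ⊆ (G n).edgeSet ∧ (Nat.card F : ℝ) ≤ ε' * (Nat.card (G n).edgeSet : ℝ) ∧
        smallComps ((G n).deleteEdges F) K') := by
  refine ⟨?_, fun V _ G hdeg hgrow ε' hε' => ?_⟩
  · obtain ⟨K, hK, hsep⟩ := exists_separator_of_subexp hsub hε
    refine ⟨K, hK, fun V _ G _ hgrow => ?_⟩
    obtain ⟨T, -, hT, hcomp⟩ := hsep V G hgrow Set.univ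
    exact ⟨T, by rw [Nat.card_coe_set_eq]; simpa using hT, by rwa [Set.compl_eq_univ_sdiff]⟩
  -- `δ` absorbs both losses: `|support| ≤ 2|E|`, and cutting off `T` deletes `≤ d|T|` edges.
  set δ := ε' / (2 * (d + 1))
  obtain ⟨K, hK, hsep⟩ := exists_separator_of_subexp hsub (δ := δ) (by positivity)
  refine ⟨K, hK, fun n => ?_⟩
  obtain ⟨T, -, hT, hcomp⟩ := hsep (V n) (G n) (hgrow n) (G n).support
  refine ⟨⋃ v ∈ T, (G n).incidenceSet v, Set.iUnion₂_subset fun v _ => incidenceSet_subset _ v,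
    ?_, smallComps_of_le (deleteEdges_biUnion_incidenceSet_le_inducedOn T) hcomp⟩
  have hF := ncard_biUnion_incidenceSet_le (hdeg n) T
  have hV := ncard_support_le_two_mul_card_edgeSet (G := G n)
  rw [Nat.card_coe_set_eq]
  calc (_ : ℝ) ≤ d * T.ncard := by exact_mod_cast hF
    _ ≤ d * (δ * (2 * Nat.card (G n).edgeSet)) := by
      gcongr
      exact hT.trans (by gcongr; exact_mod_cast hV)
    _ = 2 * d * δ * Nat.card (G n).edgeSet := by ring
    _ ≤ ε' * Nat.card (G n).edgeSet := by
      gcongr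
      simp only [δ]
      rw [mul_div_assoc', div_le_iff₀ (by positivity)]
      nlinarith

/-- subexponential growth with bounded degrees implies hyperfiniteness, and
consequently such graph sequences are antiexpanders. -/
theorem antiexpander_of_subexp (f : ℕ → ℕ) (hmono : Monotone f)
    (hsub : ∀ β : ℝ, 0 < β → ∃ R : ℕ, ∀ r : ℕ, R ≤ r → (f r : ℝ) ≤ Real.exp (β * r))
    (d : ℕ) (ε : ℝ) (hε : 0 < ε) :
    (∃ K : ℕ, 0 < K ∧ ∀ (V : Type) [Fintype V] (G : SimpleGraph V), degBound G d →
      (∀ (x : V) (r : ℕ), 1 ≤ r → Nat.card (ballSet G x r) ≤ f r) →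
      ∃ T : Set V, (Nat.card T : ℝ) ≤ ε * (Fintype.card V : ℝ) ∧
        smallComps (inducedOn G Tᶜ) K) ∧
    (∀ (V : ℕ → Type) [∀ n, Fintype (V n)] (G : ∀ n, SimpleGraph (V n)),
      (∀ n, degBound (G n) d) →
      (∀ n (x : V n) (r : ℕ), 1 ≤ r → Nat.card (ballSet (G n) x r) ≤ f r) →
      ∀ ε' : ℝ, 0 < ε' → ∃ K' : ℕ, 0 < K' ∧ ∀ n, ∃ F : Set (Sym2 (V n)),
        F ⊆ (G n).edgeSet ∧ (Nat.card F : ℝ) ≤ ε' * (Nat.card (G n).edgeSet : ℝ) ∧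
        smallComps ((G n).deleteEdges F) K') :=
  antiexpander_of_subexp_general f hsub d ε hε

end GraphPaper
end
end

section
/- Let G₁, G₂ be finite graphs on a common vertex set V with degree bound d, and let A₁, A₂: V × V → ℝ be kernels such that A_i(x,y) = 0 if d_{G_i}(x,y) > s, and such that A₁(x,·) = A₂(x,·) for every vertex x whose s-ball in G₁ equals its s-ball in G₂ (as labeled subgraphs with the kernel values). Let W be the set of vertices whose star in G₁ differs from their star in G₂, and suppose |W| ≤ (ε/C)|V| where C is the maximal number of vertices of a ball of radius s in a graph of degree bound d. Then rank(A₁ − A₂) ≤ ε|V|. -/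
open scoped Classical

noncomputable section

namespace GraphPaper

open Filter

variable {V W : Type*}

/-!
Every row of `A₁ - A₂` at a vertex whose `s`-ball looks the same in both graphs vanishes, so the
rank is at most the number of remaining vertices. A ball all of whose vertices have the same star
in both graphs is the same in both graphs (grow it one step at a time), so each remaining vertex
lies in the `s`-ball of some vertex of `W`, and there are at most `C |W| ≤ ε |V|` of them.
-/

open Finset

theorem mem_ballSet_iff_exists_walk {G : SimpleGraph V} {x v : V} {n : ℕ} :
    v ∈ ballSet G x n ↔ ∃ p : G.Walk x v, p.length ≤ n := by
  constructor
  · rintro ⟨hr, hd⟩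
    obtain ⟨p, hp⟩ := hr.exists_walk_length_eq_dist
    exact ⟨p, hp ▸ hd⟩
  · rintro ⟨p, hp⟩
    exact ⟨⟨p⟩, (SimpleGraph.dist_le p).trans hp⟩

theorem mem_ballSet_zero_iff {G : SimpleGraph V} {x v : V} : v ∈ ballSet G x 0 ↔ v = x := by
  rw [mem_ballSet_iff_exists_walk]
  constructor
  · rintro ⟨p, hp⟩
    exact (SimpleGraph.Walk.eq_of_length_eq_zero (Nat.le_zero.mp hp)).symm
  · rintro rfl
    exact ⟨.nil, le_rfl⟩

theorem mem_ballSet_succ_iff {G : SimpleGraph V} {x v : V} {n : ℕ} :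
    v ∈ ballSet G x (n + 1) ↔ v = x ∨ ∃ b, G.Adj x b ∧ v ∈ ballSet G b n := by
  simp only [mem_ballSet_iff_exists_walk]
  constructor
  · rintro ⟨p, hp⟩
    cases p with
    | nil => exact .inl rfl
    | cons hb q => exact .inr ⟨_, hb, q, by simpa using hp⟩
  · rintro (rfl | ⟨b, hb, q, hq⟩)
    · exact ⟨.nil, Nat.zero_le _⟩
    · exact ⟨.cons hb q, by simpa using hq⟩

theorem mem_ballSet_comm {G : SimpleGraph V} {x v : V} {n : ℕ} :
    v ∈ ballSet G x n ↔ x ∈ ballSet G v n := by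
  simp only [ballSet, Set.mem_ofPred_eq, SimpleGraph.dist_comm, SimpleGraph.reachable_comm]

theorem ballSet_eq_of_adj_iff {G H : SimpleGraph V} {x : V} {n : ℕ}
    (h : ∀ y ∈ ballSet G x n, ∀ b, G.Adj y b ↔ H.Adj y b) : ballSet G x n = ballSet H x n := by
  induction n generalizing x with
  | zero => ext v; simp only [mem_ballSet_zero_iff]
  | succ n ih =>
    ext v
    simp only [mem_ballSet_succ_iff, ← h x (root_mem G x _)]
    refine or_congr_right (exists_congr fun b => and_congr_right fun hb => ?_)
    rw [ih fun y hy => h y (mem_ballSet_succ_iff.mpr (.inr ⟨b, hb, hy⟩))]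

theorem adj_iff_of_graphStar_eq {G H : SimpleGraph V} {y : V}
    (h : graphStar G y = graphStar H y) (b : V) : G.Adj y b ↔ H.Adj y b := by
  simpa [graphStar] using congrArg (fun K : SimpleGraph V => K.Adj y b) h

theorem sBallMatch_of_graphStar_eq {G₁ G₂ : SimpleGraph V} {s : ℕ} {x : V}
    (h : ∀ y ∈ ballSet G₁ x s, graphStar G₁ y = graphStar G₂ y) : sBallMatch G₁ G₂ s x :=
  ⟨ballSet_eq_of_adj_iff fun y hy => adj_iff_of_graphStar_eq (h y hy),
    fun a b ha _ => adj_iff_of_graphStar_eq (h a ha) b⟩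

theorem card_filter_not_sBallMatch_le [Fintype V] {G₁ G₂ : SimpleGraph V} {s C : ℕ}
    (hC : ∀ x, Nat.card (ballSet G₁ x s) ≤ C) :
    #{x | ¬ sBallMatch G₁ G₂ s x} ≤ #{y | graphStar G₁ y ≠ graphStar G₂ y} * C := by
  have hcover : ({x | ¬ sBallMatch G₁ G₂ s x} : Finset V) ⊆
      ({y | graphStar G₁ y ≠ graphStar G₂ y} : Finset V).biUnion
        fun y => (ballSet G₁ y s).toFinset := by
    intro x hx
    obtain ⟨y, hy, hne⟩ : ∃ y ∈ ballSet G₁ x s, graphStar G₁ y ≠ graphStar G₂ y := by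
      by_contra! h
      exact (mem_filter.mp hx).2 (sBallMatch_of_graphStar_eq h)
    exact mem_biUnion.mpr ⟨y, mem_filter.mpr ⟨mem_univ y, hne⟩,
      Set.mem_toFinset.mpr (mem_ballSet_comm.mp hy)⟩
  refine (card_le_card hcover).trans (card_biUnion_le_card_mul _ _ _ fun y _ => ?_)
  rw [← Nat.card_eq_card_toFinset]
  exact hC y

theorem rank_bound_of_star_difference_general {V : Type} [Fintype V]
    (d s C : ℕ) (ε : ℝ)
    (G₁ G₂ : SimpleGraph V) (h₁ : degBound G₁ d)
    (hC : ∀ (U : Type) (K : SimpleGraph U), degBound K d →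
      ∀ x : U, Nat.card (ballSet K x s) ≤ C)
    (A₁ A₂ : Matrix V V ℝ)
    (hrow : ∀ x, sBallMatch G₁ G₂ s x → ∀ y, A₁ x y = A₂ x y)
    (hW : (Nat.card {y : V | graphStar G₁ y ≠ graphStar G₂ y} : ℝ) ≤
      (ε / (C : ℝ)) * (Fintype.card V : ℝ)) :
    (((A₁ - A₂).rank : ℝ)) ≤ ε * (Fintype.card V : ℝ) := by
  rcases isEmpty_or_nonempty V with hV | ⟨⟨x₀⟩⟩
  · have := (A₁ - A₂).rank_le_card_height
    simp_all
  have hCpos : (0 : ℝ) < C := Nat.cast_pos.mpr <|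
    (Nat.card_pos_iff.mpr ⟨⟨⟨x₀, root_mem G₁ x₀ s⟩⟩, Set.toFinite _⟩).trans_le (hC V G₁ h₁ x₀)
  have hrank : (A₁ - A₂).rank ≤ #{x | ¬ sBallMatch G₁ G₂ s x} := by
    refine (A₁ - A₂).rank_le_card_of_support_subset _ fun x hx =>
      mem_filter.mpr ⟨mem_univ x, fun hmatch => hx ?_⟩
    funext y
    simp [hrow x hmatch y]
  rw [Nat.card_eq_card_toFinset, Set.toFinset_ofPred] at hW
  calc ((A₁ - A₂).rank : ℝ) ≤ #{x | ¬ sBallMatch G₁ G₂ s x} := by exact_mod_cast hrank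
    _ ≤ #{y | graphStar G₁ y ≠ graphStar G₂ y} * C := by
      exact_mod_cast card_filter_not_sBallMatch_le (hC V G₁ h₁)
    _ ≤ ε / C * Fintype.card V * C := by gcongr
    _ = ε * Fintype.card V := by field_simp

/-- rank bound for the difference of two pattern-determined finite range
kernels in terms of the number of vertices whose stars differ. -/
theorem rank_bound_of_star_difference {V : Type} [Fintype V] [DecidableEq V]
    (d s C : ℕ) (ε : ℝ)
    (G₁ G₂ : SimpleGraph V) (h₁ : degBound G₁ d) (h₂ : degBound G₂ d)
    (hC : ∀ (U : Type) (K : SimpleGraph U), degBound K d →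
      ∀ x : U, Nat.card (ballSet K x s) ≤ C)
    (A₁ A₂ : Matrix V V ℝ)
    (hr₁ : ∀ x y, (¬ G₁.Reachable x y ∨ s < G₁.dist x y) → A₁ x y = 0)
    (hr₂ : ∀ x y, (¬ G₂.Reachable x y ∨ s < G₂.dist x y) → A₂ x y = 0)
    (hrow : ∀ x, sBallMatch G₁ G₂ s x → ∀ y, A₁ x y = A₂ x y)
    (hW : (Nat.card {y : V | graphStar G₁ y ≠ graphStar G₂ y} : ℝ) ≤
      (ε / (C : ℝ)) * (Fintype.card V : ℝ)) :
    (((A₁ - A₂).rank : ℝ)) ≤ ε * (Fintype.card V : ℝ) :=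
  rank_bound_of_star_difference_general d s C ε G₁ G₂ h₁ hC A₁ A₂ hrow hW

end GraphPaper
end
end

section
/- Let G be an infinite connected graph with bounded vertex degrees, Δ its Laplacian, and {G_n} a Følner sequence of finite spanned subgraphs (|∂G_n|/|V(G_n)| → 0). Let p_n Δ i_n denote the compression of Δ to ℓ²(V(G_n)) (where i_n is inclusion and p_n projection), and Δ_{G_n} the intrinsic Laplacian of the subgraph G_n. Then rank(p_n Δ i_n − Δ_{G_n}) ≤ |∂G_n|; consequently the sup-distance between the normalized spectral distribution functions of p_n Δ i_n and Δ_{G_n} is at most |∂G_n|/|V(G_n)|, and in particular tends to 0. -/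
/-!
The two matrices differ only on the diagonal, by `deg_G x - deg_{G_n} x`, which vanishes off
`∂G_n`; hence the rank bound. For Hermitian `C`, `D` and `N_C(λ)` the number of eigenvalues
`≤ λ`: the eigenvectors of `C` with eigenvalue `≤ λ` span an `N_C(λ)`-dimensional space on which
`⟪x, C x⟫ ≤ λ ‖x‖²`. Its intersection with `ker (C - D)` has dimension at least
`N_C(λ) - rank (C - D)` and the same bound holds there for `D`, so it meets the span of the
eigenvectors of `D` with eigenvalue `> λ` trivially: `N_C(λ) ≤ N_D(λ) + rank (C - D)`.
-/


open scoped Classical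

noncomputable section

open Finset Submodule
open scoped InnerProductSpace

namespace OrthonormalBasis

variable {ι 𝕜 E : Type*} [Fintype ι] [RCLike 𝕜] [NormedAddCommGroup E] [InnerProductSpace 𝕜 E]
  (b : OrthonormalBasis ι 𝕜 E)

theorem inner_eq_zero_of_mem_span_image {s : Set ι} {x : E} (hx : x ∈ span 𝕜 (b '' s))
    {i : ι} (hi : i ∉ s) : ⟪b i, x⟫_𝕜 = 0 := by
  rw [← b.coe_toBasis, Module.Basis.mem_span_image] at hx
  rw [← b.repr_apply_apply, ← b.coe_toBasis_repr_apply]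
  by_contra h
  exact hi (hx (Finsupp.mem_support_iff.2 h))

theorem finrank_span_image (s : Finset ι) : Module.finrank 𝕜 (span 𝕜 (b '' s)) = #s := by
  have hli := b.orthonormal.linearIndependent.comp (Subtype.val : ↥(s : Set ι) → ι)
    Subtype.val_injective
  rw [← Subtype.range_coe (s := (s : Set ι)), ← Set.range_comp, finrank_span_eq_card hli]
  simp

end OrthonormalBasis

theorem Matrix.rank_add_finrank_ker_toEuclideanLin {𝕜 m n : Type*} [RCLike 𝕜] [Fintype m]
    [Fintype n] [DecidableEq n] (M : Matrix m n 𝕜) :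
    M.rank + Module.finrank 𝕜 (LinearMap.ker (toEuclideanLin M)) = Fintype.card n := by
  rw [M.rank_eq_finrank_range_toLin (PiLp.basisFun 2 𝕜 m) (PiLp.basisFun 2 𝕜 n)]
  exact (LinearMap.finrank_range_add_finrank_ker _).trans finrank_euclideanSpace

theorem Matrix.rank_neg {R m n : Type*} [CommRing R] [Fintype n] (M : Matrix m n R) :
    (-M).rank = M.rank := by
  rw [← neg_one_smul R M]
  exact M.rank_smul_of_mem_nonZeroDivisors isUnit_one.neg.mem_nonZeroDivisors

namespace Matrix.IsHermitian

variable {ι : Type*} [Fintype ι] [DecidableEq ι] {A : Matrix ι ι ℝ} (hA : A.IsHermitian)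

theorem toEuclideanLin_eigenvectorBasis (i : ι) :
    toEuclideanLin A (hA.eigenvectorBasis i) = hA.eigenvalues i • hA.eigenvectorBasis i := by
  ext j
  exact congrFun (hA.mulVec_eigenvectorBasis i) j

theorem inner_toEuclideanLin_sub_mul_inner_self (lam : ℝ) (x : EuclideanSpace ℝ ι) :
    ⟪x, toEuclideanLin A x⟫_ℝ - lam * ⟪x, x⟫_ℝ =
      ∑ i, (hA.eigenvalues i - lam) * ⟪hA.eigenvectorBasis i, x⟫_ℝ ^ 2 := by
  set b := hA.eigenvectorBasis
  have hAb (i : ι) : ⟪b i, toEuclideanLin A x⟫_ℝ = hA.eigenvalues i * ⟪b i, x⟫_ℝ := by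
    rw [← isSymmetric_toEuclideanLin_iff.2 hA, hA.toEuclideanLin_eigenvectorBasis,
      real_inner_smul_left]
  rw [← b.sum_inner_mul_inner x, ← b.sum_inner_mul_inner x x, mul_sum, ← sum_sub_distrib]
  refine sum_congr rfl fun i _ => ?_
  rw [hAb, real_inner_comm]
  ring

theorem exists_finrank_eq_card_eigenvalues_le (lam : ℝ) :
    ∃ E : Submodule ℝ (EuclideanSpace ℝ ι),
      Module.finrank ℝ E = #{i | hA.eigenvalues i ≤ lam} ∧
      ∀ x ∈ E, ⟪x, toEuclideanLin A x⟫_ℝ ≤ lam * ⟪x, x⟫_ℝ := by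
  set s : Finset ι := {i | hA.eigenvalues i ≤ lam}
  refine ⟨span ℝ (hA.eigenvectorBasis '' s), hA.eigenvectorBasis.finrank_span_image s,
    fun x hx => sub_nonpos.1 ?_⟩
  rw [hA.inner_toEuclideanLin_sub_mul_inner_self]
  refine sum_nonpos fun i _ => ?_
  by_cases hi : hA.eigenvalues i ≤ lam
  · exact mul_nonpos_of_nonpos_of_nonneg (sub_nonpos.2 hi) (sq_nonneg _)
  · rw [hA.eigenvectorBasis.inner_eq_zero_of_mem_span_image hx (by simpa [s] using hi)]
    simp

theorem finrank_le_card_eigenvalues_le (lam : ℝ) (W : Submodule ℝ (EuclideanSpace ℝ ι))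
    (hW : ∀ x ∈ W, ⟪x, toEuclideanLin A x⟫_ℝ ≤ lam * ⟪x, x⟫_ℝ) :
    Module.finrank ℝ W ≤ #{i | hA.eigenvalues i ≤ lam} := by
  set b := hA.eigenvectorBasis
  set s : Finset ι := {i | lam < hA.eigenvalues i}
  have hdisj : Disjoint W (span ℝ (b '' s)) := by
    refine disjoint_def.2 fun x hxW hxF => ?_
    have hterm (i : ι) : 0 ≤ (hA.eigenvalues i - lam) * ⟪b i, x⟫_ℝ ^ 2 := by
      by_cases hi : lam < hA.eigenvalues i
      · exact mul_nonneg (sub_nonneg.2 hi.le) (sq_nonneg _)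
      · rw [b.inner_eq_zero_of_mem_span_image hxF (by simpa [s] using hi)]
        simp
    have hsum : ∑ i, (hA.eigenvalues i - lam) * ⟪b i, x⟫_ℝ ^ 2 = 0 :=
      le_antisymm (hA.inner_toEuclideanLin_sub_mul_inner_self lam x ▸ sub_nonpos.2 (hW x hxW))
        (sum_nonneg fun i _ => hterm i)
    have hcoord (i : ι) : ⟪b i, x⟫_ℝ = 0 := by
      by_cases hi : lam < hA.eigenvalues i
      · have := (sum_eq_zero_iff_of_nonneg fun i _ => hterm i).1 hsum i (mem_univ i)
        simpa [(sub_pos.2 hi).ne'] using this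
      · exact b.inner_eq_zero_of_mem_span_image hxF (by simpa [s] using hi)
    simpa [hcoord] using (b.sum_repr' x).symm
  have hdim := Submodule.finrank_add_finrank_le_of_disjoint hdisj
  rw [b.finrank_span_image, finrank_euclideanSpace] at hdim
  have hsplit := card_filter_add_card_filter_not (s := univ) (fun i => hA.eigenvalues i ≤ lam)
  simp only [not_le, card_univ] at hsplit
  change _ + #s = _ at hsplit
  omega

theorem card_eigenvalues_le_le_add_rank {C D : Matrix ι ι ℝ} (hC : C.IsHermitian)
    (hD : D.IsHermitian) (lam : ℝ) :
    #{i | hC.eigenvalues i ≤ lam} ≤ #{i | hD.eigenvalues i ≤ lam} + (C - D).rank := by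
  obtain ⟨E, hE, hEC⟩ := hC.exists_finrank_eq_card_eigenvalues_le lam
  have hrank := (C - D).rank_add_finrank_ker_toEuclideanLin
  set K := LinearMap.ker (toEuclideanLin (C - D))
  have hED : ∀ x ∈ E ⊓ K, ⟪x, toEuclideanLin D x⟫_ℝ ≤ lam * ⟪x, x⟫_ℝ := by
    rintro x ⟨hxE, hxK⟩
    have hCD : toEuclideanLin C x = toEuclideanLin D x := by
      simpa [K, sub_eq_zero] using hxK
    exact hCD ▸ hEC x hxE
  have hinf := hD.finrank_le_card_eigenvalues_le lam _ hED
  have hsup := Submodule.finrank_sup_add_finrank_inf_eq E K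
  have hsup_le : Module.finrank ℝ ↥(E ⊔ K) ≤ Fintype.card ι :=
    (Submodule.finrank_le _).trans_eq finrank_euclideanSpace
  omega

end Matrix.IsHermitian

namespace GraphPaper

section SpectralCount

variable {ι : Type*} [Fintype ι] [DecidableEq ι]

theorem specCount_eq_card_eigenvalues_le {A : Matrix ι ι ℝ} (hA : A.IsHermitian) (lam : ℝ) :
    specCount A lam = #{i | hA.eigenvalues i ≤ lam} := by
  rw [specCount, hA.roots_charpoly_eq_eigenvalues, Multiset.filter_map, Multiset.card_map]
  rfl

theorem abs_specCount_sub_le_rank {C D : Matrix ι ι ℝ} (hC : C.IsHermitian)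
    (hD : D.IsHermitian) (lam : ℝ) :
    |specCount C lam - specCount D lam| ≤ (C - D).rank := by
  have hCD := hC.card_eigenvalues_le_le_add_rank hD lam
  have hDC := hD.card_eigenvalues_le_le_add_rank hC lam
  rw [← neg_sub, Matrix.rank_neg] at hDC
  rw [specCount_eq_card_eigenvalues_le hC, specCount_eq_card_eigenvalues_le hD, abs_sub_le_iff,
    sub_le_iff_le_add', sub_le_iff_le_add']
  exact ⟨by exact_mod_cast hCD, by exact_mod_cast hDC⟩

end SpectralCount

variable {V : Type*}

theorem neighborSet_subset_of_notMem_gBoundary {G : SimpleGraph V} {s : Set V} {x : V}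
    (hxs : x ∈ s) (hx : x ∉ gBoundary G s) : G.neighborSet x ⊆ s := fun y hy => by
  by_contra hys
  exact hx ⟨hxs, y, hys, hy⟩

variable [DecidableEq V] (G : SimpleGraph V) (s : Finset V)

theorem lapCompress_sub_lapInduced :
    lapCompress G s - lapInduced G s = Matrix.diagonal fun x : s =>
      ((G.neighborSet x).ncard : ℝ) - ((G.neighborSet x ∩ s).ncard : ℝ) := by
  ext x y
  rcases eq_or_ne x y with rfl | h
  · simp [lapCompress, lapInduced]
  · simp [lapCompress, lapInduced, h]

theorem rank_lapCompress_sub_lapInduced_le :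
    (lapCompress G s - lapInduced G s).rank ≤ (gBoundary G s).ncard := by
  rw [lapCompress_sub_lapInduced, Matrix.rank_diagonal, Fintype.card_subtype,
    ← Set.ncard_coe_finset]
  refine Set.ncard_le_ncard_of_injOn Subtype.val (fun x hx => ?_) Subtype.val_injective.injOn
    ((s.finite_toSet).subset fun x hx => hx.1)
  by_contra hb
  have hsub := neighborSet_subset_of_notMem_gBoundary x.2 hb
  simp [Set.inter_eq_left.2 hsub] at hx

theorem lapCompress_isHermitian : (lapCompress G s).IsHermitian :=
  Matrix.IsHermitian.ext fun x y => by
    rcases eq_or_ne x y with rfl | h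
    · simp [lapCompress]
    · simp [lapCompress, h, h.symm, G.adj_comm]

theorem lapInduced_isHermitian : (lapInduced G s).IsHermitian :=
  Matrix.IsHermitian.ext fun x y => by
    rcases eq_or_ne x y with rfl | h
    · simp [lapInduced]
    · simp [lapInduced, h, h.symm, G.adj_comm]

theorem laplacian_compression_comparison_general (V : Type) [DecidableEq V]
    (G : SimpleGraph V)
    (S : ℕ → Finset V)
    (hfolner : Filter.Tendsto
      (fun n => ((gBoundary G ((S n) : Set V)).ncard : ℝ) / ((S n).card : ℝ))
      Filter.atTop (nhds 0)) :
    (∀ n, (lapCompress G (S n) - lapInduced G (S n)).rank ≤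
        (gBoundary G ((S n) : Set V)).ncard) ∧
    (∀ n (lam : ℝ),
      |specCount (lapCompress G (S n)) lam / ((S n).card : ℝ) -
        specCount (lapInduced G (S n)) lam / ((S n).card : ℝ)| ≤
        ((gBoundary G ((S n) : Set V)).ncard : ℝ) / ((S n).card : ℝ)) ∧
    Filter.Tendsto
      (fun n => ⨆ lam : ℝ,
        |specCount (lapCompress G (S n)) lam / ((S n).card : ℝ) -
          specCount (lapInduced G (S n)) lam / ((S n).card : ℝ)|)
      Filter.atTop (nhds 0) := by
  have hrank (n : ℕ) := rank_lapCompress_sub_lapInduced_le G (S n)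
  have hspec (n : ℕ) (lam : ℝ) :
      |specCount (lapCompress G (S n)) lam / ((S n).card : ℝ) -
        specCount (lapInduced G (S n)) lam / ((S n).card : ℝ)| ≤
        ((gBoundary G ((S n) : Set V)).ncard : ℝ) / ((S n).card : ℝ) := by
    rw [← sub_div, abs_div, Nat.abs_cast]
    refine div_le_div_of_nonneg_right ?_ (Nat.cast_nonneg _)
    exact (abs_specCount_sub_le_rank (lapCompress_isHermitian G (S n))
      (lapInduced_isHermitian G (S n)) lam).trans (mod_cast hrank n)
  exact ⟨hrank, hspec, squeeze_zero (fun n => Real.iSup_nonneg fun _ => abs_nonneg _)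
    (fun n => ciSup_le (hspec n)) hfolner⟩

/-- on a Følner sequence, the compression of the Laplacian and the
intrinsic Laplacian of the subgraph differ by an operator of rank at most |∂G_n|;
hence their normalized spectral distribution functions are uniformly |∂G_n|/|V(G_n)|
close, a quantity tending to 0. -/
theorem laplacian_compression_comparison (V : Type) [DecidableEq V] [Infinite V]
    (G : SimpleGraph V) (hconn : G.Connected) (d : ℕ) (hdeg : degBound G d)
    (S : ℕ → Finset V) (hne : ∀ n, (S n).Nonempty)
    (hfolner : Filter.Tendsto
      (fun n => ((gBoundary G ((S n) : Set V)).ncard : ℝ) / ((S n).card : ℝ))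
      Filter.atTop (nhds 0)) :
    (∀ n, (lapCompress G (S n) - lapInduced G (S n)).rank ≤
        (gBoundary G ((S n) : Set V)).ncard) ∧
    (∀ n (lam : ℝ),
      |specCount (lapCompress G (S n)) lam / ((S n).card : ℝ) -
        specCount (lapInduced G (S n)) lam / ((S n).card : ℝ)| ≤
        ((gBoundary G ((S n) : Set V)).ncard : ℝ) / ((S n).card : ℝ)) ∧
    Filter.Tendsto
      (fun n => ⨆ lam : ℝ,
        |specCount (lapCompress G (S n)) lam / ((S n).card : ℝ) -
          specCount (lapInduced G (S n)) lam / ((S n).card : ℝ)|)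
      Filter.atTop (nhds 0) :=
  laplacian_compression_comparison_general V G S hfolner

end GraphPaper
end
end
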